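/- Let f : ℝ^{n×p} → ℝ be differentiable, let M > 0 satisfy ‖∇f(X)‖_F ≤ M for all X in R = {X : ‖XᵀX − I_p‖_F ≤ 1/6}, and let β > 0. Then for every X ∈ R, ‖H(X)‖_F² ≥ ‖G(X)‖_F² + (1/6)·β·(5β − 21M)·‖XᵀX − I_p‖_F². -/

import Mathlib

open Matrix BigOperators Finset Kronecker

/- Equip matrix spaces with the Frobenius norm (finite-dimensional, so the resulting calculus
notions such as `fderiv`/`Differentiable` are norm-independent). -/
attribute [local instance] Matrix.frobeniusNormedAddCommGroup Matrix.frobeniusNormedSpace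

/-- The Frobenius norm of a real matrix. -/
noncomputable def frob {m k : Type*} [Fintype m] [Fintype k] (A : Matrix m k ℝ) : ℝ :=
  Real.sqrt (∑ i, ∑ j, (A i j) ^ 2)

/-- The trace inner product ⟨A, B⟩ = tr(AᵀB) of real matrices. -/
noncomputable def minner {m k : Type*} [Fintype m] [Fintype k] (A B : Matrix m k ℝ) : ℝ :=
  (Aᵀ * B).trace

/-- The symmetric part sym(B) = (B + Bᵀ)/2 of a square matrix. -/
noncomputable def symPart {k : Type*} (B : Matrix k k ℝ) : Matrix k k ℝ :=
  (1 / 2 : ℝ) • (B + Bᵀ)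

/-- The generalized Riemannian gradient G(X) = ∇f(X)((3/2)I - (1/2)XᵀX) - X·sym(Xᵀ∇f(X)),
expressed in terms of the Euclidean gradient matrix `Gf = ∇f(X)`. -/
noncomputable def Gdir {n p : ℕ} (Gf X : Matrix (Fin n) (Fin p) ℝ) :
    Matrix (Fin n) (Fin p) ℝ :=
  Gf * ((3 / 2 : ℝ) • (1 : Matrix (Fin p) (Fin p) ℝ) - (1 / 2 : ℝ) • (Xᵀ * X))
    - X * symPart (Xᵀ * Gf)

/-- The feasibility direction E(X) = X(XᵀX - I). -/
noncomputable def Edir {n p : ℕ} (X : Matrix (Fin n) (Fin p) ℝ) :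
    Matrix (Fin n) (Fin p) ℝ :=
  X * (Xᵀ * X - 1)

/-- The spectral norm (largest singular value) of a real matrix, as the operator norm of the
associated Euclidean linear map. -/
noncomputable def specNorm {m k : Type*} [Fintype m] [Fintype k] [DecidableEq k]
    (A : Matrix m k ℝ) : ℝ :=
  ‖LinearMap.toContinuousLinearMap (Matrix.toEuclideanLin A)‖

/-- The smallest singular value of a real matrix: the square root of the smallest eigenvalue
of AᵀA (= AᴴA over ℝ). -/
noncomputable def sigmaMin {m k : Type*} [Fintype m] [Fintype k] [DecidableEq m] [DecidableEq k]
    (A : Matrix m k ℝ) : ℝ :=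
  Real.sqrt (⨅ i, (show (Aᵀ * A).IsHermitian by
    simpa using Matrix.isHermitian_conjTranspose_mul_self A).eigenvalues i)

/-!
Write A = XᵀX − I, so that XᵀX = I + A with A symmetric. Cyclicity of the trace, and the fact that
sym(Xᵀ∇f) pairs with the symmetric matrix A + A² exactly as Xᵀ∇f does, give
⟨G, E⟩ = −(3/2)⟨∇f, XA²⟩ and ‖E‖² = ‖A‖² + ⟨A, A²⟩. Hence
‖H‖² = ‖G‖² − 3β⟨∇f, XA²⟩ + β²‖E‖². When ‖A‖ ≤ 1/6, Cauchy–Schwarz and submultiplicativity of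
the Frobenius norm give (5/6)‖A‖² ≤ ‖E‖² ≤ (7/6)‖A‖², so ‖E‖ ≤ (7/6)‖A‖ and the cross term is at
most (7/2)β‖∇f‖‖A‖².
-/

section Frobenius

variable {m k l : Type*} [Fintype m] [Fintype k] [Fintype l]

lemma frob_eq_norm (A : Matrix m k ℝ) : frob A = ‖A‖ := by
  rw [frob, frobenius_norm_def, Real.sqrt_eq_rpow]
  simp [sq_abs]

lemma frob_nonneg (A : Matrix m k ℝ) : 0 ≤ frob A := Real.sqrt_nonneg _

lemma frob_mul_le (A : Matrix m k ℝ) (B : Matrix k l ℝ) : frob (A * B) ≤ frob A * frob B := by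
  simpa only [frob_eq_norm] using frobenius_norm_mul A B

lemma minner_eq_sum (A B : Matrix m k ℝ) : minner A B = ∑ i, ∑ j, A i j * B i j := by
  rw [minner, trace, Finset.sum_comm]
  simp [mul_apply]

lemma frob_sq_eq_minner (A : Matrix m k ℝ) : frob A ^ 2 = minner A A := by
  rw [frob, Real.sq_sqrt (by positivity), minner_eq_sum]
  simp only [sq]

lemma minner_le_frob_mul (A B : Matrix m k ℝ) : minner A B ≤ frob A * frob B := by
  simpa only [minner_eq_sum, frob, Fintype.sum_prod_type] using
    Real.sum_mul_le_sqrt_mul_sqrt univ (fun ij : m × k => A ij.1 ij.2) (fun ij => B ij.1 ij.2)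

lemma abs_minner_le_frob_mul (A B : Matrix m k ℝ) : |minner A B| ≤ frob A * frob B := by
  have h := minner_le_frob_mul A (-B)
  rw [minner, Matrix.mul_neg, trace_neg, ← minner, frob_eq_norm (-B), norm_neg, ← frob_eq_norm] at h
  exact abs_le.mpr ⟨by linarith, minner_le_frob_mul A B⟩

lemma frob_add_smul_sq (U V : Matrix m k ℝ) (c : ℝ) :
    frob (U + c • V) ^ 2 = frob U ^ 2 + 2 * c * minner U V + c ^ 2 * frob V ^ 2 := by
  simp only [frob_sq_eq_minner, minner, transpose_add, transpose_smul, Matrix.add_mul,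
    Matrix.mul_add, Matrix.smul_mul, Matrix.mul_smul, trace_add, trace_smul, smul_eq_mul]
  rw [← trace_transpose (Vᵀ * U), transpose_mul, transpose_transpose]
  ring

lemma minner_mul_right_transpose (U : Matrix m k ℝ) (P : Matrix k l ℝ) (W : Matrix m l ℝ) :
    minner (U * P) W = minner U (W * Pᵀ) := by
  rw [minner, minner, transpose_mul, Matrix.mul_assoc, trace_mul_comm, Matrix.mul_assoc]

lemma minner_mul_left_transpose (X : Matrix m k ℝ) (S : Matrix k l ℝ) (W : Matrix m l ℝ) :
    minner (X * S) W = minner S (Xᵀ * W) := by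
  rw [minner, minner, transpose_mul, Matrix.mul_assoc]

lemma minner_symPart_of_transpose_eq (B C : Matrix k k ℝ) (hC : Cᵀ = C) :
    minner (symPart B) C = minner B C := by
  have hBC : (B * C).trace = (Bᵀ * C).trace := by
    rw [← trace_transpose_mul, hC]
  simp only [minner, symPart, transpose_smul, transpose_add, transpose_transpose, Matrix.smul_mul,
    Matrix.add_mul, trace_smul, trace_add, hBC, smul_eq_mul]
  ring

lemma minner_sub_right (U V W : Matrix m k ℝ) : minner U (V - W) = minner U V - minner U W := by
  simp only [minner, Matrix.mul_sub, trace_sub]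

end Frobenius

lemma minner_Gdir_Edir {n p : ℕ} (Gf X : Matrix (Fin n) (Fin p) ℝ) :
    minner (Gdir Gf X) (Edir X) = -(3 / 2) * minner Gf (Edir X * (Xᵀ * X - 1)) := by
  set A := Xᵀ * X - 1 with hA_def
  have hXX : Xᵀ * X = 1 + A := by rw [hA_def, add_sub_cancel]
  have hA : Aᵀ = A := by simp [hA_def]
  have hE : Edir X = X * A := rfl
  have hP : ((3 / 2 : ℝ) • (1 : Matrix (Fin p) (Fin p) ℝ) - (1 / 2 : ℝ) • (Xᵀ * X))ᵀ
      = 1 - (1 / 2 : ℝ) • A := by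
    rw [hXX]; simp only [transpose_sub, transpose_smul, transpose_add, transpose_one, hA]; module
  have hGradPart : minner (Gf * ((3 / 2 : ℝ) • 1 - (1 / 2 : ℝ) • (Xᵀ * X))) (Edir X)
      = minner Gf (Edir X) - 1 / 2 * minner Gf (Edir X * A) := by
    rw [minner_mul_right_transpose, hP, Matrix.mul_sub, Matrix.mul_one, Matrix.mul_smul,
      minner_sub_right, minner, minner, minner, Matrix.mul_smul, trace_smul, smul_eq_mul]
  have hNormalPart : minner (X * symPart (Xᵀ * Gf)) (Edir X)
      = minner Gf (Edir X) + minner Gf (Edir X * A) := by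
    have hsymm : (A + A * A)ᵀ = A + A * A := by simp [hA]
    rw [minner_mul_left_transpose, hE, ← Matrix.mul_assoc, hXX, Matrix.add_mul, Matrix.one_mul,
      minner_symPart_of_transpose_eq _ _ hsymm, minner_mul_left_transpose, transpose_transpose,
      Matrix.mul_add, Matrix.mul_assoc]
    simp only [minner, Matrix.mul_add, trace_add]
  rw [Gdir, minner, transpose_sub, Matrix.sub_mul, trace_sub, ← minner, ← minner, hGradPart,
    hNormalPart]
  ring

lemma frob_Edir_sq {n p : ℕ} (X : Matrix (Fin n) (Fin p) ℝ) :
    frob (Edir X) ^ 2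
      = frob (Xᵀ * X - 1) ^ 2 + minner (Xᵀ * X - 1) ((Xᵀ * X - 1) * (Xᵀ * X - 1)) := by
  have hXXA : Xᵀ * X * (Xᵀ * X - 1) = (Xᵀ * X - 1) + (Xᵀ * X - 1) * (Xᵀ * X - 1) := by
    noncomm_ring
  rw [frob_sq_eq_minner, frob_sq_eq_minner, Edir, minner_mul_left_transpose, ← Matrix.mul_assoc,
    hXXA, minner, minner, minner, Matrix.mul_add, trace_add]

lemma frob_Edir_sq_mem_Icc {n p : ℕ} (X : Matrix (Fin n) (Fin p) ℝ) :
    frob (Edir X) ^ 2 ∈ Set.Icc ((1 - frob (Xᵀ * X - 1)) * frob (Xᵀ * X - 1) ^ 2)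
      ((1 + frob (Xᵀ * X - 1)) * frob (Xᵀ * X - 1) ^ 2) := by
  set A := Xᵀ * X - 1
  have hcube : |minner A (A * A)| ≤ frob A ^ 3 :=
    calc |minner A (A * A)| ≤ frob A * frob (A * A) := abs_minner_le_frob_mul _ _
      _ ≤ frob A * (frob A * frob A) := by gcongr; exacts [frob_nonneg A, frob_mul_le A A]
      _ = frob A ^ 3 := by ring
  rw [frob_Edir_sq, Set.mem_Icc]
  constructor <;> nlinarith [abs_le.mp hcube]

lemma frob_sq_add_le_frob_Gdir_add_smul_Edir_sq {n p : ℕ} (Gf X : Matrix (Fin n) (Fin p) ℝ)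
    {β : ℝ} (hβ : 0 ≤ β) (hX : frob (Xᵀ * X - 1) ≤ 1 / 6) :
    frob (Gdir Gf X) ^ 2 + 1 / 6 * β * (5 * β - 21 * frob Gf) * frob (Xᵀ * X - 1) ^ 2
      ≤ frob (Gdir Gf X + β • Edir X) ^ 2 := by
  obtain ⟨hElow, hEup⟩ := frob_Edir_sq_mem_Icc X
  set a := frob (Xᵀ * X - 1)
  have ha : 0 ≤ a := frob_nonneg _
  have hEle : frob (Edir X) ≤ 7 / 6 * a :=
    pow_le_pow_iff_left₀ (frob_nonneg _) (by positivity) two_ne_zero |>.mp (by nlinarith)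
  have hcross : minner Gf (Edir X * (Xᵀ * X - 1)) ≤ frob Gf * (7 / 6 * a) * a :=
    calc minner Gf (Edir X * (Xᵀ * X - 1)) ≤ frob Gf * (frob (Edir X) * a) :=
          (minner_le_frob_mul _ _).trans (by gcongr; exacts [frob_nonneg _, frob_mul_le _ _])
      _ ≤ frob Gf * (7 / 6 * a) * a := by
          rw [← mul_assoc]; gcongr; exact frob_nonneg _
  rw [frob_add_smul_sq, minner_Gdir_Edir]
  nlinarith [mul_le_mul_of_nonneg_left hcross hβ, mul_le_mul_of_nonneg_left hElow (sq_nonneg β),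
    mul_nonneg (mul_nonneg (sq_nonneg β) (sq_nonneg a)) (sub_nonneg.2 hX)]

theorem stmt5_general {n p : ℕ}
    (gradf : Matrix (Fin n) (Fin p) ℝ → Matrix (Fin n) (Fin p) ℝ)
    (M : ℝ)
    (hbound : ∀ X : Matrix (Fin n) (Fin p) ℝ, frob (Xᵀ * X - 1) ≤ 1 / 6 → frob (gradf X) ≤ M)
    (β : ℝ) (hβ : 0 < β)
    (X : Matrix (Fin n) (Fin p) ℝ) (hX : frob (Xᵀ * X - 1) ≤ 1 / 6) :
    frob (Gdir (gradf X) X) ^ 2 + 1 / 6 * β * (5 * β - 21 * M) * frob (Xᵀ * X - 1) ^ 2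
      ≤ frob (Gdir (gradf X) X + β • Edir X) ^ 2 := by
  calc _ ≤ frob (Gdir (gradf X) X) ^ 2
        + 1 / 6 * β * (5 * β - 21 * frob (gradf X)) * frob (Xᵀ * X - 1) ^ 2 := by
        gcongr
        exact hbound X hX
    _ ≤ _ := frob_sq_add_le_frob_Gdir_add_smul_Edir_sq _ X hβ.le hX

/-- If `‖∇f(X)‖_F ≤ M` on `R = {X : ‖XᵀX - I‖_F ≤ 1/6}` with `M > 0` and `β > 0`,
then for every `X ∈ R`,
`‖H(X)‖_F² ≥ ‖G(X)‖_F² + (1/6)·β·(5β - 21M)·‖XᵀX - I‖_F²`, where `H(X) = G(X) + βE(X)`. -/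
theorem stmt5 {n p : ℕ} (f : Matrix (Fin n) (Fin p) ℝ → ℝ)
    (hf : Differentiable ℝ f)
    (gradf : Matrix (Fin n) (Fin p) ℝ → Matrix (Fin n) (Fin p) ℝ)
    (hgrad : ∀ X V, fderiv ℝ f X V = minner (gradf X) V)
    (M : ℝ) (hM : 0 < M)
    (hbound : ∀ X : Matrix (Fin n) (Fin p) ℝ, frob (Xᵀ * X - 1) ≤ 1 / 6 → frob (gradf X) ≤ M)
    (β : ℝ) (hβ : 0 < β)
    (X : Matrix (Fin n) (Fin p) ℝ) (hX : frob (Xᵀ * X - 1) ≤ 1 / 6) :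
    frob (Gdir (gradf X) X) ^ 2 + 1 / 6 * β * (5 * β - 21 * M) * frob (Xᵀ * X - 1) ^ 2
      ≤ frob (Gdir (gradf X) X + β • Edir X) ^ 2 :=
  stmt5_general gradf M hbound β hβ X hX
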